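/- arXiv:1403.2749 — 6 statements merged into one kernel-verified Lean document; each statement's English description precedes it below -/
import Mathlib

section
/- Let T be an m×n real matrix with all entries in [0,1]. Then there exists an m×n matrix F with entries in {0,1} such that f_{ij} ∈ {⌊t_{ij}⌋, ⌈t_{ij}⌉} for all i,j, and: (a) for each row i and each 1 ≤ b ≤ n, |∑_{j=1}^{b}(t_{ij} - f_{ij})| < 1; (b) for each column j and each 1 ≤ b ≤ m, |∑_{i=1}^{b}(t_{ij} - f_{ij})| < 1; and (c) |∑_{i,j}(t_{ij} - f_{ij})| < 1. -/
/-!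
The rounding is a vertex of a polytope. First border `T` with an extra row and column (the
amounts `⌈s⌉ - s` missing from its row and column sums `s`, and a corner entry) so that all row
and column sums become integers. Let `P` be the set of matrices `X` such that every entry and
every initial segment of a row or of a column of `X` has its sum between the floor and the
ceiling of the corresponding sum for `T`; it is a compact convex set containing `T`, so it has an
extreme point `X`.

Suppose `X` has a fractional entry. Cut each row and each column of `X` wherever its initial sum
is an integer; a segment between two cuts has an integral sum, so it contains either no or at
least two fractional entries. Hence there are at most half as many row segments, and at most
half as many column segments, as fractional entries; as the row-segment sums and the
column-segment sums of a matrix have the same total, "zero sum on every segment" has a nonzero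
solution `D` supported on the fractional entries. Such a `D` has zero sum on every constraint of
`P` that is tight at `X`, so `X ± ε D ∈ P` for small `ε`, contradicting extremality. So `X` is a
`0/1` matrix, and since the bordered matrix has exact row and column sums, the error of the total
sum of its upper-left block is the error at the corner entry.
-/

open Finset AddSubgroup Filter Topology

namespace TwoWayRounding

section FloorCeil

theorem eq_of_mem_Icc_floor_ceil {s t : ℝ} (ht : t ∈ zmultiples (1 : ℝ))
    (hs : s ∈ Set.Icc (⌊t⌋ : ℝ) ⌈t⌉) : s = t := by
  obtain ⟨k, rfl⟩ := mem_zmultiples_iff.1 ht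
  simp only [zsmul_eq_mul, mul_one, Int.floor_intCast, Int.ceil_intCast] at hs ⊢
  exact le_antisymm hs.2 hs.1

theorem abs_sub_lt_one_of_mem_Icc_floor_ceil {s t : ℝ} (hs : s ∈ Set.Icc (⌊t⌋ : ℝ) ⌈t⌉) :
    |t - s| < 1 :=
  abs_sub_lt_iff.2
    ⟨by linarith [Int.sub_one_lt_floor t, hs.1], by linarith [Int.ceil_lt_add_one t, hs.2]⟩

theorem eq_floor_or_eq_ceil_of_mem_Icc {s t : ℝ} (hs : s ∈ zmultiples (1 : ℝ))
    (h : s ∈ Set.Icc (⌊t⌋ : ℝ) ⌈t⌉) : s = ⌊t⌋ ∨ s = ⌈t⌉ := by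
  obtain ⟨k, rfl⟩ := mem_zmultiples_iff.1 hs
  simp only [zsmul_eq_mul, mul_one, Set.mem_Icc, Int.cast_le, Int.cast_inj] at h ⊢
  have := Int.ceil_le_floor_add_one t
  omega

theorem eq_zero_or_eq_one_of_mem_Icc {s t : ℝ} (hs : s ∈ zmultiples (1 : ℝ))
    (h : s ∈ Set.Icc (⌊t⌋ : ℝ) ⌈t⌉) (ht : t ∈ Set.Icc (0 : ℝ) 1) : s = 0 ∨ s = 1 := by
  obtain ⟨k, rfl⟩ := mem_zmultiples_iff.1 hs
  have h0 : 0 ≤ ⌊t⌋ := Int.floor_nonneg.2 ht.1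
  have h1 : ⌈t⌉ ≤ 1 := Int.ceil_le.2 (by simpa using ht.2)
  simp only [zsmul_eq_mul, mul_one, Set.mem_Icc, Int.cast_le] at h ⊢
  obtain rfl | rfl : k = 0 ∨ k = 1 := by omega
  all_goals simp

theorem eventually_add_mul_mem_Icc_floor_ceil {s t δ : ℝ} (hs : s ∈ Set.Icc (⌊t⌋ : ℝ) ⌈t⌉)
    (hδ : s ∈ zmultiples (1 : ℝ) → δ = 0) :
    ∀ᶠ ε in 𝓝 (0 : ℝ), s + ε * δ ∈ Set.Icc (⌊t⌋ : ℝ) ⌈t⌉ := by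
  by_cases hsZ : s ∈ zmultiples (1 : ℝ)
  · simp [hδ hsZ, hs]
  have hlt : s ∈ Set.Ioo (⌊t⌋ : ℝ) ⌈t⌉ :=
    ⟨hs.1.lt_of_ne fun h => hsZ (h ▸ intCast_mem_zmultiples_one _),
      hs.2.lt_of_ne fun h => hsZ (h ▸ intCast_mem_zmultiples_one _)⟩
  have hc : Tendsto (fun ε : ℝ => s + ε * δ) (𝓝 0) (𝓝 s) :=
    (continuous_const.add (continuous_id.mul continuous_const)).tendsto' 0 s (by simp)
  exact (hc.eventually (isOpen_Ioo.mem_nhds hlt)).mono fun _ h => Set.Ioo_subset_Icc_self h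

end FloorCeil

section Polytope

variable {ι K : Type*} (S : K → Finset ι)

def floorCeilPolytope (t : ι → ℝ) : Set (ι → ℝ) :=
  {x | ∀ k, ∑ e ∈ S k, x e ∈ Set.Icc (⌊∑ e ∈ S k, t e⌋ : ℝ) ⌈∑ e ∈ S k, t e⌉}

variable {S}

theorem self_mem_floorCeilPolytope (t : ι → ℝ) : t ∈ floorCeilPolytope S t :=
  fun _ => ⟨Int.floor_le _, Int.le_ceil _⟩

theorem isCompact_floorCeilPolytope (hS : ∀ e, ∃ k, S k = {e}) (t : ι → ℝ) :
    IsCompact (floorCeilPolytope S t) := by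
  have hclosed : IsClosed (floorCeilPolytope S t) := by
    simp only [floorCeilPolytope, Set.ofPred_forall]
    exact isClosed_iInter fun k =>
      isClosed_Icc.preimage (continuous_finsetSum _ fun e _ => continuous_apply e)
  refine (isCompact_univ_pi fun e => isCompact_Icc (a := (⌊t e⌋ : ℝ)) (b := ⌈t e⌉))
    |>.of_isClosed_subset hclosed fun x hx e _ => ?_
  obtain ⟨k, hk⟩ := hS e
  simpa [hk] using hx k

theorem eventually_add_smul_mem_floorCeilPolytope [Finite K] {t x d : ι → ℝ}
    (hx : x ∈ floorCeilPolytope S t)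
    (hd : ∀ k, ∑ e ∈ S k, x e ∈ zmultiples (1 : ℝ) → ∑ e ∈ S k, d e = 0) :
    ∀ᶠ ε in 𝓝 (0 : ℝ), x + ε • d ∈ floorCeilPolytope S t := by
  refine eventually_all.2 fun k => ?_
  have h (ε : ℝ) : ∑ e ∈ S k, (x + ε • d) e = ∑ e ∈ S k, x e + ε * ∑ e ∈ S k, d e := by
    simp [sum_add_distrib, mul_sum]
  simp only [h]
  exact eventually_add_mul_mem_Icc_floor_ceil (hx k) (hd k)

theorem eq_zero_of_mem_extremePoints_floorCeilPolytope [Finite K] {t x d : ι → ℝ}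
    (hx : x ∈ (floorCeilPolytope S t).extremePoints ℝ)
    (hd : ∀ k, ∑ e ∈ S k, x e ∈ zmultiples (1 : ℝ) → ∑ e ∈ S k, d e = 0) : d = 0 := by
  have h := eventually_add_smul_mem_floorCeilPolytope hx.1 hd
  have hneg := (continuous_neg.tendsto' (0 : ℝ) 0 neg_zero).eventually h
  obtain ⟨ε, ⟨h₁, h₂⟩, hε⟩ :=
    ((h.and hneg).filter_mono nhdsWithin_le_nhds |>.and (self_mem_nhdsWithin (s := {0}ᶜ))).exists
  rw [neg_smul, ← sub_eq_add_neg] at h₂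
  have hx₁ : x + ε • d = x := hx.2 h₁ h₂ (mem_openSegment_add_sub x (ε • d))
  exact (smul_eq_zero.1 (add_eq_left.1 hx₁)).resolve_left hε

end Polytope

section Fibers

theorem two_mul_card_image_le_card {E γ : Type*} [Fintype E] [DecidableEq γ] (f : E → γ)
    (hf : ∀ e, ∃ e', e' ≠ e ∧ f e' = f e) : 2 * #(univ.image f) ≤ Fintype.card E := by
  refine mul_card_image_le_card univ 2 fun a ha => ?_
  obtain ⟨e, -, rfl⟩ := mem_image.1 ha
  obtain ⟨e', hne, he'⟩ := hf e
  exact one_lt_card.2 ⟨e', by simp [he'], e, by simp, hne⟩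

theorem _root_.LinearMap.exists_ne_zero_apply_eq_zero_of_comp_eq_zero {K V W : Type*} [Field K]
    [AddCommGroup V] [Module K V] [FiniteDimensional K V] [AddCommGroup W] [Module K W]
    [FiniteDimensional K W] (f : V →ₗ[K] W) {g : W →ₗ[K] K} (hg : g ≠ 0) (hgf : g ∘ₗ f = 0)
    (hdim : Module.finrank K W ≤ Module.finrank K V) : ∃ v, v ≠ 0 ∧ f v = 0 := by
  have hlt : Module.finrank K (LinearMap.ker g) < Module.finrank K V :=
    (Submodule.finrank_lt (mt LinearMap.ker_eq_top.1 hg)).trans_le hdim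
  obtain ⟨v, hv, hv0⟩ := Submodule.exists_mem_ne_zero_of_ne_bot
    (LinearMap.ker_ne_bot_of_finrank_lt
      (f := f.codRestrict _ fun v => LinearMap.mem_ker.2 (LinearMap.congr_fun hgf v)) hlt)
  exact ⟨v, hv0, congrArg Subtype.val (LinearMap.mem_ker.1 hv)⟩

/- The fibre sums of `r` and of `c` have the same total, so the fibre-sum map `ℝ^E → ℝ^A × ℝ^B`
(`A`, `B` the images of `r`, `c`) lands in a hyperplane, while `#A + #B ≤ card E` because every
fibre has at least two elements. -/
theorem exists_ne_zero_sum_fiber_eq_zero {E α β : Type*} [Fintype E] [Nonempty E]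
    [DecidableEq α] [DecidableEq β] (r : E → α) (c : E → β)
    (hr : ∀ e, ∃ e', e' ≠ e ∧ r e' = r e) (hc : ∀ e, ∃ e', e' ≠ e ∧ c e' = c e) :
    ∃ d : E → ℝ, d ≠ 0 ∧ (∀ a, ∑ e with r e = a, d e = 0) ∧ ∀ b, ∑ e with c e = b, d e = 0 := by
  let A := univ.image r
  let B := univ.image c
  let φ : (E → ℝ) →ₗ[ℝ] (A → ℝ) × (B → ℝ) :=
    (LinearMap.pi fun a : A => ∑ e with r e = a, LinearMap.proj e).prod
      (LinearMap.pi fun b : B => ∑ e with c e = b, LinearMap.proj e)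
  have hφ (d : E → ℝ) :
      φ d = (fun a : A => ∑ e with r e = a, d e, fun b : B => ∑ e with c e = b, d e) := by
    ext <;> simp [φ]
  let ψ : (A → ℝ) × (B → ℝ) →ₗ[ℝ] ℝ := (∑ a, LinearMap.proj a).coprod (-∑ b, LinearMap.proj b)
  have hψφ : ψ ∘ₗ φ = 0 := by
    ext d : 1
    simp only [LinearMap.comp_apply, ψ, hφ, LinearMap.coprod_apply, LinearMap.neg_apply,
      LinearMap.coe_sum, LinearMap.coe_proj, Finset.sum_apply, Function.eval, LinearMap.zero_apply]
    rw [sum_coe_sort A (fun a => ∑ e with r e = a, d e),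
      sum_coe_sort B (fun b => ∑ e with c e = b, d e),
      sum_fiberwise_of_maps_to (fun e _ => mem_image_of_mem r (mem_univ e)),
      sum_fiberwise_of_maps_to (fun e _ => mem_image_of_mem c (mem_univ e)), add_neg_cancel]
  have hψ : ψ ≠ 0 := by
    obtain ⟨e⟩ := ‹Nonempty E›
    intro h
    have := LinearMap.congr_fun h (Pi.single ⟨r e, mem_image_of_mem r (mem_univ e)⟩ 1, 0)
    simp [ψ] at this
  have hdim : Module.finrank ℝ ((A → ℝ) × (B → ℝ)) ≤ Module.finrank ℝ (E → ℝ) := by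
    have := two_mul_card_image_le_card r hr
    have := two_mul_card_image_le_card c hc
    simp only [A, B, Module.finrank_prod, Module.finrank_fintype_fun_eq_card, Fintype.card_coe]
    omega
  obtain ⟨d, hd0, hφd⟩ := φ.exists_ne_zero_apply_eq_zero_of_comp_eq_zero hψ hψφ hdim
  rw [hφ, Prod.mk_eq_zero] at hφd
  refine ⟨d, hd0, fun a => ?_, fun b => ?_⟩
  · by_cases ha : a ∈ A
    · exact congrFun hφd.1 ⟨a, ha⟩
    · exact sum_eq_zero fun e he => (ha (mem_image.2 ⟨e, mem_univ e, (mem_filter.1 he).2⟩)).elim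
  · by_cases hb : b ∈ B
    · exact congrFun hφd.2 ⟨b, hb⟩
    · exact sum_eq_zero fun e he => (hb (mem_image.2 ⟨e, mem_univ e, (mem_filter.1 he).2⟩)).elim

theorem exists_ne_zero_supported_sum_fiber_eq_zero {ι α β : Type*} [Fintype ι]
    [DecidableEq α] [DecidableEq β] {E : Finset ι} (hE : E.Nonempty) (r : ι → α) (c : ι → β)
    (hr : ∀ e ∈ E, ∃ e' ∈ E, e' ≠ e ∧ r e' = r e) (hc : ∀ e ∈ E, ∃ e' ∈ E, e' ≠ e ∧ c e' = c e) :
    ∃ d : ι → ℝ, d ≠ 0 ∧ (∀ e ∉ E, d e = 0) ∧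
      (∀ a, ∑ e with r e = a, d e = 0) ∧ ∀ b, ∑ e with c e = b, d e = 0 := by
  classical
  have := hE.to_subtype
  obtain ⟨g, hg, hgr, hgc⟩ :=
    exists_ne_zero_sum_fiber_eq_zero (fun e : E => r e) (fun e : E => c e)
      (fun e => let ⟨e', he', hne, h⟩ := hr e e.2; ⟨⟨e', he'⟩, Subtype.coe_ne_coe.1 hne, h⟩)
      (fun e => let ⟨e', he', hne, h⟩ := hc e e.2; ⟨⟨e', he'⟩, Subtype.coe_ne_coe.1 hne, h⟩)
  let d : ι → ℝ := fun e => if h : e ∈ E then g ⟨e, h⟩ else 0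
  have hd (p : ι → Prop) [DecidablePred p] :
      ∑ e with p e, d e = ∑ e ∈ univ.filter (fun e : E => p e), g e := by
    rw [sum_filter, sum_filter, ← sum_subset (subset_univ E) fun e _ he => by simp [d, he],
      ← sum_coe_sort E]
    simp only [d, coe_mem, dif_pos]
  exact ⟨d, fun h => hg (funext fun e => by simpa [d] using congrFun h e), fun e he => dif_neg he,
    fun a => (hd _).trans (hgr a), fun b => (hd _).trans (hgc b)⟩

end Fibers

theorem _root_.AddSubgroup.exists_ne_notMem_of_sum_mem {M ι : Type*} [AddCommGroup M]
    [DecidableEq ι] (G : AddSubgroup M) {s : Finset ι} {f : ι → M} (hs : ∑ i ∈ s, f i ∈ G)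
    {j : ι} (hj : j ∈ s) (hfj : f j ∉ G) : ∃ j' ∈ s, j' ≠ j ∧ f j' ∉ G := by
  by_contra! h
  refine hfj ?_
  have := G.sub_mem hs (G.sum_mem fun i hi => h i (mem_erase.1 hi).2 (mem_erase.1 hi).1)
  rwa [← add_sum_erase s f hj, add_sub_cancel_right] at this

section PrefixSums

variable {M N : Type*}

def prefixSum [AddCommMonoid M] {n : ℕ} (x : Fin n → M) (b : ℕ) : M :=
  ∑ j ∈ univ.filter (fun j : Fin n => (j : ℕ) < b), x j

theorem prefixSum_of_le [AddCommMonoid M] {n b : ℕ} (x : Fin n → M) (h : n ≤ b) :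
    prefixSum x b = ∑ j, x j := by
  rw [prefixSum, filter_true_of_mem fun j _ => j.2.trans_le h]

theorem prefixSum_castSucc [AddCommMonoid M] {n b : ℕ} (x : Fin (n + 1) → M) (h : b ≤ n) :
    prefixSum x b = prefixSum (fun j : Fin n => x j.castSucc) b := by
  simp only [prefixSum, sum_filter, Fin.sum_univ_castSucc, Fin.val_castSucc, Fin.val_last,
    if_neg h.not_gt, add_zero]

theorem prefixSum_add_sum_filter [AddCommMonoid M] {n : ℕ} (x : Fin n → M) {p c : ℕ}
    (h : p ≤ c) :
    prefixSum x p + ∑ j ∈ univ.filter (fun j : Fin n => p ≤ (j : ℕ) ∧ (j : ℕ) < c), x j =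
      prefixSum x c := by
  rw [prefixSum, prefixSum, ← sum_union (disjoint_filter.2 fun _ _ h1 h2 => by omega)]
  congr 1
  ext j
  simp only [mem_union, mem_filter, mem_univ, true_and]
  omega

variable [AddCommGroup M] (G : AddSubgroup M) {n : ℕ} (x : Fin n → M)

/- The cuts of `x` are the lengths `b` of the initial segments whose sum lies in `G`; entry `j`
lies in the segment starting at the last cut `≤ j`. -/
open scoped Classical in
noncomputable def lastCut (j : Fin n) : ℕ :=
  Nat.findGreatest (fun b => prefixSum x b ∈ G) j

variable {G x}

theorem lastCut_le (j : Fin n) : lastCut G x j ≤ j := by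
  classical
  exact Nat.findGreatest_le _

theorem prefixSum_lastCut_mem (j : Fin n) : prefixSum x (lastCut G x j) ∈ G := by
  classical
  have h0 : prefixSum x 0 ∈ G := by simp [prefixSum]
  exact Nat.findGreatest_spec (P := fun b => prefixSum x b ∈ G) (Nat.zero_le _) h0

theorem le_lastCut {j : Fin n} {b : ℕ} (hb : b ≤ j) (hbG : prefixSum x b ∈ G) :
    b ≤ lastCut G x j := by
  classical
  exact Nat.le_findGreatest hb hbG

theorem lastCut_lt_iff {b : ℕ} (hb : prefixSum x b ∈ G) (j : Fin n) :
    lastCut G x j < b ↔ (j : ℕ) < b :=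
  ⟨fun h => by by_contra! h'; exact (le_lastCut h' hb).not_gt h, (lastCut_le j).trans_lt⟩

theorem prefixSum_eq_zero_of_sum_fiber_eq_zero [AddCommMonoid N] {b : ℕ}
    (hb : prefixSum x b ∈ G) {d : Fin n → N} (hd : ∀ p, ∑ j with lastCut G x j = p, d j = 0) :
    prefixSum d b = 0 := by
  rw [prefixSum, filter_congr fun j _ => (lastCut_lt_iff hb j).symm,
    ← sum_fiberwise_of_maps_to (g := lastCut G x) (t := range b) fun j hj => by simpa using hj]
  refine sum_eq_zero fun p hp => ?_
  rw [filter_filter, filter_congr fun j _ => and_iff_right_of_imp fun h => h ▸ mem_range.1 hp]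
  exact hd p

theorem exists_ne_notMem_lastCut_eq (hn : prefixSum x n ∈ G) {j : Fin n} (hj : x j ∉ G) :
    ∃ j', j' ≠ j ∧ x j' ∉ G ∧ lastCut G x j' = lastCut G x j := by
  classical
  have hex : ∃ c, (j : ℕ) < c ∧ prefixSum x c ∈ G := ⟨n, j.2, hn⟩
  obtain ⟨hjc, hcG⟩ := Nat.find_spec hex
  have hseg (j' : Fin n) (h₁ : lastCut G x j ≤ j') (h₂ : (j' : ℕ) < Nat.find hex) :
      lastCut G x j' = lastCut G x j := by
    refine le_antisymm ?_ (le_lastCut h₁ (prefixSum_lastCut_mem j))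
    by_contra! h
    have : (j : ℕ) < lastCut G x j' := by
      by_contra! h'
      exact (le_lastCut h' (prefixSum_lastCut_mem j')).not_gt h
    exact Nat.find_min hex ((lastCut_le j').trans_lt h₂) ⟨this, prefixSum_lastCut_mem j'⟩
  have hsum := prefixSum_add_sum_filter x ((lastCut_le (G := G) (x := x) j).trans hjc.le)
  rw [← eq_sub_iff_add_eq'] at hsum
  have hmem := hsum ▸ G.sub_mem hcG (prefixSum_lastCut_mem j)
  obtain ⟨j', hj', hne, hj'G⟩ := G.exists_ne_notMem_of_sum_mem hmem
    (mem_filter.2 ⟨mem_univ j, lastCut_le j, hjc⟩) hj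
  exact ⟨j', hne, hj'G, hseg j' (mem_filter.1 hj').2.1 (mem_filter.1 hj').2.2⟩

end PrefixSums

theorem sum_filter_prodMk_fst_eq {α β γ M : Type*} [Fintype α] [Fintype β] [DecidableEq α]
    [DecidableEq γ] [AddCommMonoid M] (f : α × β → M) (g : α → β → γ) (i : α) (a : γ) :
    ∑ e ∈ univ.filter (fun e : α × β => (e.1, g e.1 e.2) = (i, a)), f e =
      ∑ j ∈ univ.filter (fun j => g i j = a), f (i, j) := by
  simp [sum_filter, Fintype.sum_prod_type, ite_and]

theorem sum_filter_prodMk_snd_eq {α β γ M : Type*} [Fintype α] [Fintype β] [DecidableEq β]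
    [DecidableEq γ] [AddCommMonoid M] (f : α × β → M) (g : β → α → γ) (j : β) (a : γ) :
    ∑ e ∈ univ.filter (fun e : α × β => (e.2, g e.2 e.1) = (j, a)), f e =
      ∑ i ∈ univ.filter (fun i => g j i = a), f (i, j) := by
  simp [sum_filter, Fintype.sum_prod_type_right, ite_and]

section RoundingPolytope

variable {m n : ℕ}

def roundingCells :
    (Fin m × Fin n) ⊕ (Fin m × Fin (n + 1)) ⊕ (Fin n × Fin (m + 1)) → Finset (Fin m × Fin n)
  | .inl e => {e}
  | .inr (.inl (i, b)) => (univ.filter fun j : Fin n => (j : ℕ) < b).map (.sectR i _)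
  | .inr (.inr (j, b)) => (univ.filter fun i : Fin m => (i : ℕ) < b).map (.sectL _ j)

theorem roundingCells_singleton (e : Fin m × Fin n) : ∃ k, roundingCells k = {e} :=
  ⟨.inl e, rfl⟩

section Mem

variable {t x : Fin m × Fin n → ℝ} (hx : x ∈ floorCeilPolytope roundingCells t)
include hx

theorem mem_Icc_of_mem_floorCeilPolytope (e : Fin m × Fin n) :
    x e ∈ Set.Icc (⌊t e⌋ : ℝ) ⌈t e⌉ := by
  simpa [roundingCells] using hx (.inl e)

theorem prefixSum_row_mem_Icc (i : Fin m) {b : ℕ} (hb : b ≤ n) :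
    prefixSum (fun j => x (i, j)) b ∈
      Set.Icc (⌊prefixSum (fun j => t (i, j)) b⌋ : ℝ) ⌈prefixSum (fun j => t (i, j)) b⌉ := by
  simpa [roundingCells, prefixSum] using hx (.inr (.inl (i, ⟨b, Nat.lt_succ_of_le hb⟩)))

theorem prefixSum_col_mem_Icc (j : Fin n) {b : ℕ} (hb : b ≤ m) :
    prefixSum (fun i => x (i, j)) b ∈
      Set.Icc (⌊prefixSum (fun i => t (i, j)) b⌋ : ℝ) ⌈prefixSum (fun i => t (i, j)) b⌉ := by
  simpa [roundingCells, prefixSum] using hx (.inr (.inr (j, ⟨b, Nat.lt_succ_of_le hb⟩)))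

theorem sum_row_eq_of_mem_floorCeilPolytope {i : Fin m}
    (ht : ∑ j, t (i, j) ∈ zmultiples (1 : ℝ)) : ∑ j, x (i, j) = ∑ j, t (i, j) := by
  have := prefixSum_row_mem_Icc hx i le_rfl
  simp only [prefixSum_of_le _ le_rfl] at this
  exact eq_of_mem_Icc_floor_ceil ht this

theorem sum_col_eq_of_mem_floorCeilPolytope {j : Fin n}
    (ht : ∑ i, t (i, j) ∈ zmultiples (1 : ℝ)) : ∑ i, x (i, j) = ∑ i, t (i, j) := by
  have := prefixSum_col_mem_Icc hx j le_rfl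
  simp only [prefixSum_of_le _ le_rfl] at this
  exact eq_of_mem_Icc_floor_ceil ht this

end Mem

theorem mem_zmultiples_of_mem_extremePoints {t x : Fin m × Fin n → ℝ}
    (hrow : ∀ i, ∑ j, t (i, j) ∈ zmultiples (1 : ℝ))
    (hcol : ∀ j, ∑ i, t (i, j) ∈ zmultiples (1 : ℝ))
    (hx : x ∈ (floorCeilPolytope roundingCells t).extremePoints ℝ) (e : Fin m × Fin n) :
    x e ∈ zmultiples (1 : ℝ) := by
  set G := zmultiples (1 : ℝ)
  by_contra he
  have hxrow (i : Fin m) : prefixSum (fun j => x (i, j)) n ∈ G := by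
    rw [prefixSum_of_le _ le_rfl, sum_row_eq_of_mem_floorCeilPolytope hx.1 (hrow i)]
    exact hrow i
  have hxcol (j : Fin n) : prefixSum (fun i => x (i, j)) m ∈ G := by
    rw [prefixSum_of_le _ le_rfl, sum_col_eq_of_mem_floorCeilPolytope hx.1 (hcol j)]
    exact hcol j
  obtain ⟨d, hd0, hdE, hdr, hdc⟩ := exists_ne_zero_supported_sum_fiber_eq_zero
    (E := univ.filter fun e => x e ∉ G) ⟨e, by simpa using he⟩
    (fun e => (e.1, lastCut G (fun j => x (e.1, j)) e.2))
    (fun e => (e.2, lastCut G (fun i => x (i, e.2)) e.1))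
    (fun e he => by
      obtain ⟨j', hne, hj', heq⟩ := exists_ne_notMem_lastCut_eq (hxrow e.1) (mem_filter.1 he).2
      exact ⟨(e.1, j'), by simpa using hj', fun h => hne (congrArg Prod.snd h), by simp [heq]⟩)
    (fun e he => by
      obtain ⟨i', hne, hi', heq⟩ := exists_ne_notMem_lastCut_eq (hxcol e.2) (mem_filter.1 he).2
      exact ⟨(i', e.2), by simpa using hi', fun h => hne (congrArg Prod.fst h), by simp [heq]⟩)
  refine hd0 (eq_zero_of_mem_extremePoints_floorCeilPolytope hx ?_)
  rintro (e | ⟨i, b⟩ | ⟨j, b⟩) hk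
  · simp only [roundingCells, sum_singleton] at hk ⊢
    exact hdE e (by simpa using hk)
  · simp only [roundingCells, sum_map, Function.Embedding.sectR_apply] at hk ⊢
    exact prefixSum_eq_zero_of_sum_fiber_eq_zero hk fun p =>
      (sum_filter_prodMk_fst_eq d (fun i j => lastCut G (fun j => x (i, j)) j) i p).symm.trans
        (hdr (i, p))
  · simp only [roundingCells, sum_map, Function.Embedding.sectL_apply] at hk ⊢
    exact prefixSum_eq_zero_of_sum_fiber_eq_zero hk fun p =>
      (sum_filter_prodMk_snd_eq d (fun j i => lastCut G (fun i => x (i, j)) i) j p).symm.trans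
        (hdc (j, p))

end RoundingPolytope

section Border

variable {M : Type*} [AddCommGroup M] {m n : ℕ}

theorem sum_last_col_mem (G : AddSubgroup M) (A : Fin m → Fin (n + 1) → M)
    (hrow : ∀ i, ∑ j, A i j ∈ G) (hcol : ∀ j : Fin n, ∑ i, A i j.castSucc ∈ G) :
    ∑ i, A i (Fin.last n) ∈ G := by
  have h : ∑ i, A i (Fin.last n) = ∑ i, ∑ j, A i j - ∑ j : Fin n, ∑ i, A i j.castSucc := by
    rw [sum_comm (s := univ (α := Fin n))]
    simp [Fin.sum_univ_castSucc, sum_add_distrib]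
  rw [h]
  exact G.sub_mem (G.sum_mem fun i _ => hrow i) (G.sum_mem fun j _ => hcol j)

theorem sum_sum_castSucc_eq_last (A : Fin (m + 1) → Fin (n + 1) → M)
    (hrow : ∀ i, ∑ j, A i j = 0) (hcol : ∑ i, A i (Fin.last n) = 0) :
    ∑ i : Fin m, ∑ j : Fin n, A i.castSucc j.castSucc = A (Fin.last m) (Fin.last n) := by
  have h (i : Fin m) : ∑ j : Fin n, A i.castSucc j.castSucc = -A i.castSucc (Fin.last n) :=
    eq_neg_of_add_eq_zero_left ((Fin.sum_univ_castSucc _).symm.trans (hrow i.castSucc))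
  rw [sum_congr rfl fun i _ => h i, sum_neg_distrib]
  exact neg_eq_of_add_eq_zero_right ((Fin.sum_univ_castSucc _).symm.trans hcol)

end Border

theorem add_fract_neg_mem_zmultiples (s : ℝ) : s + Int.fract (-s) ∈ zmultiples (1 : ℝ) := by
  have h : s + Int.fract (-s) = ((-⌊-s⌋ : ℤ) : ℝ) := by rw [Int.fract]; push_cast; ring
  exact h ▸ intCast_mem_zmultiples_one _

/- `Int.fract (-s) = ⌈s⌉ - s` is what the row or column with sum `s` lacks to reach an integer. -/
noncomputable def augment {m n : ℕ} (T : Matrix (Fin m) (Fin n) ℝ) :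
    Matrix (Fin (m + 1)) (Fin (n + 1)) ℝ :=
  Fin.snoc (fun i => Fin.snoc (T i) (Int.fract (-∑ j, T i j)))
    (Fin.snoc (fun j => Int.fract (-∑ i, T i j)) (Int.fract (-∑ j, Int.fract (-∑ i, T i j))))

section Augment

variable {m n : ℕ} (T : Matrix (Fin m) (Fin n) ℝ)

@[simp]
theorem augment_castSucc_castSucc (i : Fin m) (j : Fin n) :
    augment T i.castSucc j.castSucc = T i j := by
  simp [augment]

theorem sum_augment_row_mem (i : Fin (m + 1)) : ∑ j, augment T i j ∈ zmultiples (1 : ℝ) := by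
  induction i using Fin.lastCases <;>
    simp [augment, Fin.sum_univ_castSucc, add_fract_neg_mem_zmultiples]

theorem sum_augment_col_castSucc_mem (j : Fin n) :
    ∑ i, augment T i j.castSucc ∈ zmultiples (1 : ℝ) := by
  simp [augment, Fin.sum_univ_castSucc, add_fract_neg_mem_zmultiples]

theorem sum_augment_col_mem (j : Fin (n + 1)) : ∑ i, augment T i j ∈ zmultiples (1 : ℝ) := by
  induction j using Fin.lastCases with
  | last => exact sum_last_col_mem _ _ (sum_augment_row_mem T) (sum_augment_col_castSucc_mem T)
  | cast j => exact sum_augment_col_castSucc_mem T j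

end Augment

end TwoWayRounding

open TwoWayRounding

/-- Two-way matrix rounding (Doerr/Knuth): every m×n real matrix with entries in [0,1]
has a {0,1}-valued rounding consistent (with error < 1) with all initial row sums,
all initial column sums, and the total sum. -/
theorem stmt6 (m n : ℕ) (T : Matrix (Fin m) (Fin n) ℝ)
    (hT : ∀ i j, 0 ≤ T i j ∧ T i j ≤ 1) :
    ∃ F : Matrix (Fin m) (Fin n) ℝ,
      (∀ i j, F i j = 0 ∨ F i j = 1) ∧
      (∀ i j, F i j = (⌊T i j⌋ : ℝ) ∨ F i j = (⌈T i j⌉ : ℝ)) ∧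
      (∀ i : Fin m, ∀ b : ℕ, 1 ≤ b → b ≤ n →
        |∑ j ∈ Finset.univ.filter (fun j : Fin n => (j : ℕ) < b), (T i j - F i j)| < 1) ∧
      (∀ j : Fin n, ∀ b : ℕ, 1 ≤ b → b ≤ m →
        |∑ i ∈ Finset.univ.filter (fun i : Fin m => (i : ℕ) < b), (T i j - F i j)| < 1) ∧
      |∑ i : Fin m, ∑ j : Fin n, (T i j - F i j)| < 1 := by
  let t : Fin (m + 1) × Fin (n + 1) → ℝ := fun e => augment T e.1 e.2
  obtain ⟨x, hx⟩ := (isCompact_floorCeilPolytope roundingCells_singleton t).extremePoints_nonempty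
    ⟨t, self_mem_floorCeilPolytope t⟩
  have hint :=
    mem_zmultiples_of_mem_extremePoints (sum_augment_row_mem T) (sum_augment_col_mem T) hx
  have hentry (i : Fin m) (j : Fin n) :
      x (i.castSucc, j.castSucc) ∈ Set.Icc (⌊T i j⌋ : ℝ) ⌈T i j⌉ := by
    simpa [t] using mem_Icc_of_mem_floorCeilPolytope hx.1 (i.castSucc, j.castSucc)
  refine ⟨fun i j => x (i.castSucc, j.castSucc),
    fun i j => eq_zero_or_eq_one_of_mem_Icc (hint _) (hentry i j) (hT i j),
    fun i j => eq_floor_or_eq_ceil_of_mem_Icc (hint _) (hentry i j), fun i b _ hb => ?_,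
    fun j b _ hb => ?_, ?_⟩ <;> beta_reduce
  · have h := prefixSum_row_mem_Icc hx.1 i.castSucc (hb.trans n.le_succ)
    simp only [prefixSum_castSucc _ hb, t, augment_castSucc_castSucc] at h
    rw [sum_sub_distrib]
    exact abs_sub_lt_one_of_mem_Icc_floor_ceil h
  · have h := prefixSum_col_mem_Icc hx.1 j.castSucc (hb.trans m.le_succ)
    simp only [prefixSum_castSucc _ hb, t, augment_castSucc_castSucc] at h
    rw [sum_sub_distrib]
    exact abs_sub_lt_one_of_mem_Icc_floor_ceil h
  · have hcorner := sum_sum_castSucc_eq_last (fun i j => t (i, j) - x (i, j))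
      (fun i => by
        simp [sum_sub_distrib, sum_row_eq_of_mem_floorCeilPolytope hx.1 (sum_augment_row_mem T i)])
      (by
        simp [sum_sub_distrib, sum_col_eq_of_mem_floorCeilPolytope hx.1 (sum_augment_col_mem T _)])
    simp only [t, augment_castSucc_castSucc] at hcorner
    rw [hcorner]
    exact abs_sub_lt_one_of_mem_Icc_floor_ceil
      (mem_Icc_of_mem_floorCeilPolytope hx.1 (Fin.last m, Fin.last n))
end

section
/- Let x₁,…,x_n be real numbers and γ a permutation of {1,…,n}. Then there exist integers x̄₁,…,x̄_n with ⌊x_i⌋ ≤ x̄_i ≤ ⌈x_i⌉ for all i, such that for every 1 ≤ k ≤ n, ⌊x₁+⋯+x_k⌋ ≤ x̄₁+⋯+x̄_k ≤ ⌈x₁+⋯+x_k⌉ and ⌊x_{γ(1)}+⋯+x_{γ(k)}⌋ ≤ x̄_{γ(1)}+⋯+x̄_{γ(k)} ≤ ⌈x_{γ(1)}+⋯+x_{γ(k)}⌉. -/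
/-!
Let `P` be the polytope of real vectors `v` whose coordinates and partial sums in both orders
lie between the floors and ceilings of the corresponding quantities for `x`; it contains `x`.
As long as `v ∈ P` has a set `F` of non-integral coordinates, there is a nonzero direction
supported on `F` that fixes every partial sum which is already an integer: in each order the
integral partial sums cut `F` into blocks of at least two elements (a block with a single
non-integer would be a non-integral difference of integers), so each order imposes at most
`#F / 2` equations, and when both orders reach `#F / 2` they share the equation for the total
sum of `F`. Moving along this direction until a new constraint becomes tight enlarges the set
of integral constraints, so the process ends at an integral point of `P`.
-/

open Finset

def integers : Subring ℝ := ⊥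

lemma mem_integers {x : ℝ} : x ∈ integers ↔ ∃ m : ℤ, (m : ℝ) = x := Subring.mem_bot

lemma intCast_mem_integers (m : ℤ) : (m : ℝ) ∈ integers := mem_integers.2 ⟨m, rfl⟩

section Integrality

variable {α : Type*} [DecidableEq α] {F : Finset α} {v : α → ℝ}

lemma sum_notMem_integers_of_card_filter_eq_one (hF : ∀ i, i ∈ F ↔ v i ∉ integers)
    {s : Finset α} (hs : #{i ∈ s | i ∈ F} = 1) : ∑ i ∈ s, v i ∉ integers := by
  obtain ⟨i₀, hi₀⟩ := card_eq_one.1 hs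
  have hi₀F : i₀ ∈ F := (mem_filter.1 (hi₀ ▸ mem_singleton_self i₀)).2
  have hrest : ∑ i ∈ s with i ∉ F, v i ∈ integers :=
    sum_mem fun i hi => not_not.1 fun h => (mem_filter.1 hi).2 ((hF i).2 h)
  rw [← sum_filter_add_sum_filter_not s (· ∈ F), hi₀, sum_singleton]
  exact fun h => (hF i₀).1 hi₀F (by simpa using sub_mem h hrest)

lemma card_filter_ne_add_one_of_subset (hF : ∀ i, i ∈ F ↔ v i ∉ integers) {A B : Finset α}
    (hAB : A ⊆ B) (hA : ∑ i ∈ A, v i ∈ integers) (hB : ∑ i ∈ B, v i ∈ integers) :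
    #{i ∈ B | i ∈ F} ≠ #{i ∈ A | i ∈ F} + 1 := by
  intro hcard
  have hdiff : #{i ∈ B \ A | i ∈ F} = 1 := by
    have hsplit : {i ∈ B \ A | i ∈ F} = {i ∈ B | i ∈ F} \ {i ∈ A | i ∈ F} := by
      ext; simp only [mem_filter, mem_sdiff]; tauto
    rw [hsplit, card_sdiff_of_subset (filter_subset_filter _ hAB)]
    omega
  refine sum_notMem_integers_of_card_filter_eq_one hF hdiff ?_
  rw [sum_sdiff_eq_sub hAB]
  exact sub_mem hB hA

end Integrality

section SparseFamilies

variable {α : Type*}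

def SizesTwoApart (𝒜 : Finset (Finset α)) : Prop :=
  ∀ S ∈ 𝒜, ∀ T ∈ 𝒜, S ≠ T → #S + 2 ≤ #T ∨ #T + 2 ≤ #S

lemma SizesTwoApart.injOn_card_div_two {𝒜 : Finset (Finset α)} (h : SizesTwoApart 𝒜) :
    Set.InjOn (fun S => #S / 2) (𝒜 : Set (Finset α)) := by
  intro S hS T hT hST
  by_contra hne
  have := h S hS T hT hne
  simp only at hST
  omega

lemma mapsTo_card_div_two [Fintype α] (s : Set (Finset α)) :
    Set.MapsTo (fun S : Finset α => #S / 2) s (range (Fintype.card α / 2 + 1)) := by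
  intro S _
  have := S.card_le_univ
  simp only [coe_range, Set.mem_Iio]
  omega

lemma SizesTwoApart.two_mul_card_le [Fintype α] {𝒜 : Finset (Finset α)} (h : SizesTwoApart 𝒜) :
    2 * #𝒜 ≤ Fintype.card α + 2 := by
  have := card_le_card_of_injOn _ (mapsTo_card_div_two _) h.injOn_card_div_two
  rw [card_range] at this
  omega

lemma SizesTwoApart.univ_mem [Fintype α] {𝒜 : Finset (Finset α)} (h : SizesTwoApart 𝒜)
    (hcard : 2 * #𝒜 = Fintype.card α + 2) : univ ∈ 𝒜 := by
  set m := Fintype.card α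
  have himage : 𝒜.image (fun S => #S / 2) = range (m / 2 + 1) := by
    refine eq_of_subset_of_card_le ?_ ?_
    · exact image_subset_iff.2 fun S hS => mapsTo_card_div_two _ hS
    · rw [card_image_of_injOn h.injOn_card_div_two, card_range]
      omega
  obtain ⟨S, hS, hS2⟩ := mem_image.1 (himage ▸ self_mem_range_succ (m / 2))
  have hSm : #S ≤ m := S.card_le_univ
  have hSuniv : S = univ := eq_univ_of_card S (by omega)
  exact hSuniv ▸ hS

lemma card_union_erase_empty_lt [Fintype α] [Nonempty α] [DecidableEq α] {𝒜 ℬ : Finset (Finset α)}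
    (h𝒜 : SizesTwoApart 𝒜) (hℬ : SizesTwoApart ℬ) (h𝒜₀ : ∅ ∈ 𝒜) (hℬ₀ : ∅ ∈ ℬ) :
    #((𝒜 ∪ ℬ).erase ∅) < Fintype.card α := by
  have hunion := card_union_add_card_inter 𝒜 ℬ
  have herase := card_erase_of_mem (mem_union_left ℬ h𝒜₀)
  have hinter : 1 ≤ #(𝒜 ∩ ℬ) := card_pos.2 ⟨∅, mem_inter.2 ⟨h𝒜₀, hℬ₀⟩⟩
  have hpos := Fintype.card_pos (α := α)
  have h𝒜le := h𝒜.two_mul_card_le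
  have hℬle := hℬ.two_mul_card_le
  by_cases hfull : 2 * #𝒜 = Fintype.card α + 2 ∧ 2 * #ℬ = Fintype.card α + 2
  · have hpair : {∅, univ} ⊆ 𝒜 ∩ ℬ := by
      simp only [insert_subset_iff, singleton_subset_iff, mem_inter]
      exact ⟨⟨h𝒜₀, hℬ₀⟩, h𝒜.univ_mem hfull.1, hℬ.univ_mem hfull.2⟩
    have := card_le_card hpair
    rw [card_pair (univ_nonempty.ne_empty.symm)] at this
    omega
  · omega

end SparseFamilies

lemma exists_ne_zero_forall_sum_eq_zero {K α : Type*} [Field K] [Fintype α]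
    (𝒞 : Finset (Finset α)) (h𝒞 : #𝒞 < Fintype.card α) :
    ∃ e : α → K, e ≠ 0 ∧ ∀ S ∈ 𝒞, ∑ i ∈ S, e i = 0 := by
  let Φ : (α → K) →ₗ[K] (𝒞 → K) := LinearMap.pi fun S => ∑ i ∈ S.1, LinearMap.proj i
  have hker : LinearMap.ker Φ ≠ ⊥ := LinearMap.ker_ne_bot_of_finrank_lt (by simpa using h𝒞)
  obtain ⟨e, he, he0⟩ := Submodule.exists_mem_ne_zero_of_ne_bot hker
  refine ⟨e, he0, fun S hS => ?_⟩
  simpa [Φ] using congrFun (LinearMap.mem_ker.1 he) ⟨S, hS⟩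

lemma SizesTwoApart.exists_ne_zero_sum_eq_zero {K α : Type*} [Field K] [Fintype α] [Nonempty α]
    [DecidableEq α] {𝒜 ℬ : Finset (Finset α)} (h𝒜 : SizesTwoApart 𝒜) (hℬ : SizesTwoApart ℬ)
    (h𝒜₀ : ∅ ∈ 𝒜) (hℬ₀ : ∅ ∈ ℬ) :
    ∃ e : α → K, e ≠ 0 ∧ ∀ S ∈ 𝒜 ∪ ℬ, ∑ i ∈ S, e i = 0 := by
  obtain ⟨e, he, hsum⟩ :=
    exists_ne_zero_forall_sum_eq_zero (K := K) _ (card_union_erase_empty_lt h𝒜 hℬ h𝒜₀ hℬ₀)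
  refine ⟨e, he, fun S hS => ?_⟩
  rcases eq_or_ne S ∅ with rfl | hne
  · exact sum_empty
  · exact hsum S (mem_erase.2 ⟨hne, hS⟩)

section Rounding

variable {ι E : Type*} [AddCommGroup E] [Module ℝ E] (L : ι → E →ₗ[ℝ] ℝ) (x : E)

def IsRounding (v : E) : Prop := ∀ c, (⌊L c x⌋ : ℝ) ≤ L c v ∧ L c v ≤ ⌈L c x⌉

def integralConstraints (v : E) : Set ι := {c | L c v ∈ integers}

lemma isRounding_self : IsRounding L x x := fun _ => ⟨Int.floor_le _, Int.le_ceil _⟩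

lemma exists_pos_first_hit {lo hi a δ : ℝ} (hlo : lo < a) (hhi : a < hi) (hδ : δ ≠ 0) :
    ∃ τ > 0, (∀ t, 0 ≤ t → t ≤ τ → lo ≤ a + t * δ ∧ a + t * δ ≤ hi) ∧
      (a + τ * δ = lo ∨ a + τ * δ = hi) := by
  rcases hδ.lt_or_gt with hneg | hpos
  · refine ⟨(lo - a) / δ, div_pos_of_neg_of_neg (by linarith) hneg, fun t ht htτ => ?_,
      Or.inl (by field_simp; ring)⟩
    have : (lo - a) / δ * δ ≤ t * δ := mul_le_mul_of_nonpos_right htτ hneg.le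
    rw [div_mul_cancel₀ _ hneg.ne] at this
    constructor <;> nlinarith
  · refine ⟨(hi - a) / δ, div_pos (by linarith) hpos, fun t ht htτ => ?_,
      Or.inr (by field_simp; ring)⟩
    have : t * δ ≤ (hi - a) / δ * δ := mul_le_mul_of_nonneg_right htτ hpos.le
    rw [div_mul_cancel₀ _ hpos.ne'] at this
    constructor <;> nlinarith

variable {L x}

lemma IsRounding.lt_of_notMem_integers {v : E} (hv : IsRounding L x v) {c : ι}
    (hc : L c v ∉ integers) : (⌊L c x⌋ : ℝ) < L c v ∧ L c v < ⌈L c x⌉ :=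
  ⟨(hv c).1.lt_of_ne fun h => hc (h ▸ intCast_mem_integers _),
    (hv c).2.lt_of_ne fun h => hc (h ▸ intCast_mem_integers _)⟩

-- Move from `v` along `d` until the first non-integral constraint moved by `d` hits a bound.
lemma IsRounding.exists_integralConstraints_ssubset [Fintype ι] {v d : E}
    (hv : IsRounding L x v) (hd : ∀ c, L c v ∈ integers → L c d = 0) (hmove : ∃ c, L c d ≠ 0) :
    ∃ v', IsRounding L x v' ∧ integralConstraints L v ⊂ integralConstraints L v' := by
  classical
  choose! τ hτpos hτ hτhit using fun c (hc : L c d ≠ 0) =>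
    have hbounds := hv.lt_of_notMem_integers fun h => hc (hd c h)
    exists_pos_first_hit hbounds.1 hbounds.2 hc
  obtain ⟨c₀, hc₀⟩ := hmove
  obtain ⟨c₁, hc₁, hmin⟩ :=
    exists_min_image ({c | L c d ≠ 0} : Finset ι) τ ⟨c₀, by simpa using hc₀⟩
  rw [mem_filter] at hc₁
  have hval : ∀ c, L c (v + τ c₁ • d) = L c v + τ c₁ * L c d := fun c => by
    rw [map_add, map_smul, smul_eq_mul]
  refine ⟨v + τ c₁ • d, fun c => ?_, ?_⟩
  · rw [hval]
    by_cases hc : L c d = 0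
    · simpa [hc] using hv c
    · exact hτ c hc _ (hτpos c₁ hc₁.2).le (hmin c (by simpa using hc))
  · refine (Set.ssubset_iff_of_subset fun c hc => ?_).2 ⟨c₁, ?_, fun h => hc₁.2 (hd c₁ h)⟩
    · simpa [integralConstraints, hval, hd c hc] using hc
    · simp only [integralConstraints, Set.mem_ofPred_eq, hval]
      rcases hτhit c₁ hc₁.2 with h | h <;> rw [h] <;> exact intCast_mem_integers _

theorem exists_isRounding_forall_mem_integers [Finite ι]
    (hstep : ∀ v, IsRounding L x v → (∃ c, L c v ∉ integers) →
      ∃ d, (∀ c, L c v ∈ integers → L c d = 0) ∧ ∃ c, L c d ≠ 0) :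
    ∃ v, IsRounding L x v ∧ ∀ c, L c v ∈ integers := by
  have := Fintype.ofFinite ι
  suffices ∀ S : Set ι, ∀ v, integralConstraints L v = S → IsRounding L x v →
      ∃ w, IsRounding L x w ∧ ∀ c, L c w ∈ integers from
    this _ x rfl (isRounding_self L x)
  intro S
  induction S using WellFoundedGT.induction with
  | _ S ih =>
    rintro v rfl hv
    by_cases hint : ∀ c, L c v ∈ integers
    · exact ⟨v, hv, hint⟩
    obtain ⟨d, hd, hmove⟩ := hstep v hv (not_forall.1 hint)
    obtain ⟨v', hv', hlt⟩ := hv.exists_integralConstraints_ssubset hd hmove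
    exact ih _ hlt v' rfl hv'

end Rounding

lemma sum_dite_mem_eq_sum_subtype {α M : Type*} [DecidableEq α] [AddCommMonoid M]
    (s F : Finset α) (e : F → M) :
    ∑ i ∈ s, (if h : i ∈ F then e ⟨i, h⟩ else 0) = ∑ j ∈ s.subtype (· ∈ F), e j := by
  rw [← sum_filter_of_ne fun i _ hi => not_not.1 fun h => hi (dif_neg h),
    ← sum_subtype_eq_sum_filter]
  exact sum_congr rfl fun j _ => dif_pos j.2

section TwoWayRounding

variable {n : ℕ}

def prefixSet (σ : Equiv.Perm (Fin n)) (k : ℕ) : Finset (Fin n) :=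
  ({i | (i : ℕ) < k} : Finset (Fin n)).map σ.toEmbedding

lemma sum_prefixSet {M : Type*} [AddCommMonoid M] (σ : Equiv.Perm (Fin n)) (k : ℕ) (f : Fin n → M) :
    ∑ j ∈ prefixSet σ k, f j = ∑ i ∈ ({i | (i : ℕ) < k} : Finset (Fin n)), f (σ i) :=
  sum_map _ _ _

lemma prefixSet_zero (σ : Equiv.Perm (Fin n)) : prefixSet σ 0 = ∅ := by
  simp [prefixSet]

lemma prefixSet_mono (σ : Equiv.Perm (Fin n)) : Monotone (prefixSet σ) := fun _ _ hkk' =>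
  map_subset_map.2 fun i => by simp only [mem_filter_univ]; omega

open Classical in
noncomputable def integralPrefixTraces (σ : Equiv.Perm (Fin n)) (v : Fin n → ℝ)
    (F : Finset (Fin n)) : Finset (Finset F) :=
  ({k | ∑ j ∈ prefixSet σ k, v j ∈ integers} : Finset (Fin (n + 1))).image
    fun k : Fin (n + 1) => (prefixSet σ k).subtype (· ∈ F)

variable (σ : Equiv.Perm (Fin n)) {v : Fin n → ℝ} {F : Finset (Fin n)}

lemma empty_mem_integralPrefixTraces : ∅ ∈ integralPrefixTraces σ v F :=
  mem_image.2 ⟨0, by simp [prefixSet_zero, zero_mem], by simp [prefixSet_zero]; rfl⟩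

lemma sizesTwoApart_integralPrefixTraces (hF : ∀ i, i ∈ F ↔ v i ∉ integers) :
    SizesTwoApart (integralPrefixTraces σ v F) := by
  simp only [SizesTwoApart, integralPrefixTraces, mem_image, mem_filter_univ]
  rintro _ ⟨k, hk, rfl⟩ _ ⟨k', hk', rfl⟩ hne
  wlog hkk' : k ≤ k' generalizing k k'
  · exact (this k' hk' k hk hne.symm (le_of_not_ge hkk')).symm
  have hsub := prefixSet_mono σ (Fin.le_iff_val_le_val.1 hkk')
  have hlt := card_lt_card ((subtype_mono (p := (· ∈ F)) hsub).ssubset_of_ne hne)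
  have hgap := card_filter_ne_add_one_of_subset hF hsub hk hk'
  rw [card_subtype, card_subtype] at hlt ⊢
  omega

variable (γ : Equiv.Perm (Fin n))

def roundingSet : Fin n ⊕ Fin (n + 1) ⊕ Fin (n + 1) → Finset (Fin n) :=
  Sum.elim (fun i => {i}) (Sum.elim (fun k => prefixSet 1 k) (fun k => prefixSet γ k))

def roundingForm (c : Fin n ⊕ Fin (n + 1) ⊕ Fin (n + 1)) : (Fin n → ℝ) →ₗ[ℝ] ℝ :=
  ∑ j ∈ roundingSet γ c, LinearMap.proj j

lemma roundingForm_apply (c : Fin n ⊕ Fin (n + 1) ⊕ Fin (n + 1)) (v : Fin n → ℝ) :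
    roundingForm γ c v = ∑ j ∈ roundingSet γ c, v j := by
  simp [roundingForm]

lemma exists_roundingForm_direction {v : Fin n → ℝ} (hv : ∃ c, roundingForm γ c v ∉ integers) :
    ∃ d, (∀ c, roundingForm γ c v ∈ integers → roundingForm γ c d = 0) ∧
      ∃ c, roundingForm γ c d ≠ 0 := by
  classical
  set F : Finset (Fin n) := {i | v i ∉ integers}
  have hF : ∀ i, i ∈ F ↔ v i ∉ integers := by simp [F]
  have : Nonempty F := by
    obtain ⟨c, hc⟩ := hv
    rw [roundingForm_apply] at hc
    by_contra hempty
    exact hc (sum_mem fun i _ => not_not.1 fun h => hempty ⟨⟨i, (hF i).2 h⟩⟩)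
  obtain ⟨e, he, hsum⟩ := (sizesTwoApart_integralPrefixTraces 1 hF).exists_ne_zero_sum_eq_zero
    (K := ℝ) (sizesTwoApart_integralPrefixTraces γ hF)
    (empty_mem_integralPrefixTraces 1) (empty_mem_integralPrefixTraces γ)
  refine ⟨fun i => if h : i ∈ F then e ⟨i, h⟩ else 0, ?_, ?_⟩
  · rintro (i | k | k) hc <;>
      simp only [roundingForm_apply, roundingSet, Sum.elim_inl, Sum.elim_inr] at hc ⊢
    · simp [(hF i).not_left.2 (by simpa using hc)]
    · rw [sum_dite_mem_eq_sum_subtype]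
      exact hsum _ (mem_union_left _ (mem_image_of_mem _ (by simpa using hc)))
    · rw [sum_dite_mem_eq_sum_subtype]
      exact hsum _ (mem_union_right _ (mem_image_of_mem _ (by simpa using hc)))
  · obtain ⟨j, hj⟩ := Function.ne_iff.1 he
    exact ⟨.inl j, by simpa [roundingForm_apply, roundingSet] using hj⟩

theorem exists_int_isRounding_roundingForm (x : Fin n → ℝ) :
    ∃ z : Fin n → ℤ, IsRounding (roundingForm γ) x fun i => (z i : ℝ) := by
  obtain ⟨w, hw, hint⟩ := exists_isRounding_forall_mem_integers (L := roundingForm γ) (x := x)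
    fun _ _ hv => exists_roundingForm_direction γ hv
  choose z hz using fun i =>
    mem_integers.1 (by simpa [roundingForm_apply, roundingSet] using hint (.inl i))
  exact ⟨z, funext hz ▸ hw⟩

lemma IsRounding.floor_le_sum_and_sum_le_ceil {x : Fin n → ℝ} {z : Fin n → ℤ}
    (h : IsRounding (roundingForm γ) x fun i => (z i : ℝ)) (c : Fin n ⊕ Fin (n + 1) ⊕ Fin (n + 1)) :
    ⌊∑ j ∈ roundingSet γ c, x j⌋ ≤ ∑ j ∈ roundingSet γ c, z j ∧
      ∑ j ∈ roundingSet γ c, z j ≤ ⌈∑ j ∈ roundingSet γ c, x j⌉ := by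
  have hc := h c
  simp only [roundingForm_apply] at hc
  exact_mod_cast hc

end TwoWayRounding

/-- Knuth's two-way rounding theorem: for reals x₁,…,x_n and a permutation γ there is a
rounding x̄ whose partial sums are consistent with those of x in both the identity order
and the order given by γ. -/
theorem stmt7 (n : ℕ) (x : Fin n → ℝ) (γ : Equiv.Perm (Fin n)) :
    ∃ xb : Fin n → ℤ,
      (∀ i, ⌊x i⌋ ≤ xb i ∧ xb i ≤ ⌈x i⌉) ∧
      (∀ k : ℕ, 1 ≤ k → k ≤ n →
        (⌊∑ i ∈ Finset.univ.filter (fun i : Fin n => (i : ℕ) < k), x i⌋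
            ≤ ∑ i ∈ Finset.univ.filter (fun i : Fin n => (i : ℕ) < k), xb i ∧
          ∑ i ∈ Finset.univ.filter (fun i : Fin n => (i : ℕ) < k), xb i
            ≤ ⌈∑ i ∈ Finset.univ.filter (fun i : Fin n => (i : ℕ) < k), x i⌉) ∧
        (⌊∑ i ∈ Finset.univ.filter (fun i : Fin n => (i : ℕ) < k), x (γ i)⌋
            ≤ ∑ i ∈ Finset.univ.filter (fun i : Fin n => (i : ℕ) < k), xb (γ i) ∧
          ∑ i ∈ Finset.univ.filter (fun i : Fin n => (i : ℕ) < k), xb (γ i)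
            ≤ ⌈∑ i ∈ Finset.univ.filter (fun i : Fin n => (i : ℕ) < k), x (γ i)⌉)) := by
  obtain ⟨z, hz⟩ := exists_int_isRounding_roundingForm γ x
  refine ⟨z, fun i => by simpa [roundingSet] using hz.floor_le_sum_and_sum_le_ceil γ (.inl i),
    fun k _ hkn => ⟨?_, ?_⟩⟩
  · simpa [roundingSet, sum_prefixSet] using
      hz.floor_le_sum_and_sum_le_ceil γ (.inr (.inl ⟨k, by omega⟩))
  · simpa [roundingSet, sum_prefixSet] using
      hz.floor_le_sum_and_sum_le_ceil γ (.inr (.inr ⟨k, by omega⟩))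
end

section
/- Let F be a {0,1}-valued m×n matrix and row i satisfy: for some real c ≤ 1/2, every consecutive block of p entries in row i (reading with wraparound) has real 'target' sum at most pc, and suppose the partial sums of row i over-round (are at the ceiling) at position h, i.e., ∑_{j=1}^{h} f_{ij} = ⌈∑_{j=1}^{h} t_{ij}⌉ where t_{ij} ≤ c for all j and |∑_{j=1}^{b}(t_{ij}-f_{ij})| < 1 for all b. Then for every positive integer e, ∑_{j=h+1}^{h+2e} f_{ij} ≤ e. -/
/-!
Write `T_b` and `F_b` for the initial sums of `t` and `f`. Over-rounding at `h` gives
`T_h ≤ F_h`, and the error bound at `b = h + 2e` gives `F_b < T_b + 1`; subtracting,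
the block sum of `f` is below the block sum of `t` plus one, hence below `2ec + 1 ≤ e + 1`.
The block sum of `f` counts ones, so it is an integer and therefore at most `e`.
-/

open Finset

theorem Finset.sum_Icc_one_add_sum_Icc_succ {M : Type*} [AddCommMonoid M] (g : ℕ → M)
    {h b : ℕ} (hhb : h ≤ b) :
    ∑ j ∈ Icc 1 h, g j + ∑ j ∈ Icc (h + 1) b, g j = ∑ j ∈ Icc 1 b, g j := by
  have hIcc (m : ℕ) : Icc 1 m = Ioc 0 m := Icc_add_one_left_eq_Ioc 0 m
  rw [hIcc, hIcc, Icc_add_one_left_eq_Ioc]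
  exact sum_Ioc_consecutive g (Nat.zero_le h) hhb

theorem Finset.sum_eq_card_filter_of_zero_or_one {ι R : Type*} [AddCommMonoidWithOne R]
    [DecidableEq R] {s : Finset ι} {f : ι → R} (hf : ∀ j ∈ s, f j = 0 ∨ f j = 1) :
    ∑ j ∈ s, f j = #{j ∈ s | f j = 1} := by
  rw [← sum_boole]
  refine sum_congr rfl fun j hj => ?_
  rcases hf j hj with h0 | h1 <;> simp [*]

theorem Finset.sum_le_of_zero_or_one_of_lt_add_one {ι R : Type*} [Semiring R] [LinearOrder R]
    [IsStrictOrderedRing R] {s : Finset ι} {f : ι → R} (hf : ∀ j ∈ s, f j = 0 ∨ f j = 1)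
    {k : ℕ} (hlt : ∑ j ∈ s, f j < k + 1) : ∑ j ∈ s, f j ≤ k := by
  classical
  rw [sum_eq_card_filter_of_zero_or_one hf] at hlt ⊢
  exact_mod_cast Nat.lt_succ_iff.mp (by exact_mod_cast hlt)

theorem Finset.sum_le_of_card_eq_two_mul_of_le_half {ι : Type*} {s : Finset ι} {e : ℕ}
    (hs : #s = 2 * e) {t : ι → ℝ} {c : ℝ} (hc : c ≤ 1 / 2) (ht : ∀ j ∈ s, t j ≤ c) :
    ∑ j ∈ s, t j ≤ e :=
  calc ∑ j ∈ s, t j ≤ #s • c := sum_le_card_nsmul s t c ht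
    _ = 2 * e * c := by rw [hs, nsmul_eq_mul]; push_cast; ring
    _ ≤ e := by nlinarith [(Nat.cast_nonneg e : (0 : ℝ) ≤ e)]

theorem stmt11_general (n h e : ℕ) (hhn : h + 2 * e ≤ n)
    (c : ℝ) (hc : c ≤ 1 / 2)
    (t f : ℕ → ℝ)
    (ht : ∀ j, 1 ≤ j → j ≤ n → t j ≤ c)
    (hf : ∀ j, f j = 0 ∨ f j = 1)
    (hforward : ∑ j ∈ Finset.Icc 1 h, f j = (⌈∑ j ∈ Finset.Icc 1 h, t j⌉ : ℝ))
    (herr : ∀ b : ℕ, 1 ≤ b → b ≤ n → |∑ j ∈ Finset.Icc 1 b, (t j - f j)| < 1) :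
    ∑ j ∈ Finset.Icc (h + 1) (h + 2 * e), f j ≤ (e : ℝ) := by
  have hle : h ≤ h + 2 * e := Nat.le_add_right h _
  have hover : ∑ j ∈ Icc 1 h, t j ≤ ∑ j ∈ Icc 1 h, f j := hforward ▸ Int.le_ceil _
  have hend : |∑ j ∈ Icc 1 (h + 2 * e), (t j - f j)| < 1 := by
    rcases Nat.eq_zero_or_pos (h + 2 * e) with hb | hb
    · simp [hb]
    · exact herr _ hb hhn
  rw [sum_sub_distrib, abs_lt, ← sum_Icc_one_add_sum_Icc_succ t hle,
    ← sum_Icc_one_add_sum_Icc_succ f hle] at hend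
  have htblock : ∑ j ∈ Icc (h + 1) (h + 2 * e), t j ≤ e :=
    sum_le_of_card_eq_two_mul_of_le_half (by simp only [Nat.card_Icc]; omega) hc
      fun j hj => ht j (by simp at hj; omega) (by simp at hj; omega)
  exact sum_le_of_zero_or_one_of_lt_add_one (fun j _ => hf j) (by linarith [hend.1])

/-- If a {0,1} row f rounds a row t with all entries at most c ≤ 1/2, the initial sums of
f track those of t with error < 1, and f over-rounds (is at the ceiling) at position h,
then among the next 2e entries of f there are at most e ones. -/
theorem stmt11 (n h e : ℕ) (he : 0 < e) (hhn : h + 2 * e ≤ n)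
    (c : ℝ) (hc : c ≤ 1 / 2)
    (t f : ℕ → ℝ)
    (ht : ∀ j, 1 ≤ j → j ≤ n → t j ≤ c)
    (hf : ∀ j, f j = 0 ∨ f j = 1)
    (hforward : ∑ j ∈ Finset.Icc 1 h, f j = (⌈∑ j ∈ Finset.Icc 1 h, t j⌉ : ℝ))
    (herr : ∀ b : ℕ, 1 ≤ b → b ≤ n → |∑ j ∈ Finset.Icc 1 b, (t j - f j)| < 1) :
    ∑ j ∈ Finset.Icc (h + 1) (h + 2 * e), f j ≤ (e : ℝ) :=
  stmt11_general n h e hhn c hc t f ht hf hforward herr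
end

section
/- Suppose a {0,1} sequence f_1, f_2, … has the property that among any 2e consecutive entries following a 'forward' position there are at most e ones (and at most e+1 ones following a 'backward' position). Let N(d) denote the position of the d-th zero. If position N(d) is forward then N(d+e) - N(d) ≤ 2e, and if position N(d) is backward then N(d+e) - N(d) ≤ 2e + 2. -/
/-!
Let `Z n` be the number of zeros among `f 1, …, f n`. Since `f` is {0,1}-valued, a window of
length `k` after position `h` with at most `k - e` ones contains at least `e` zeros, so
`Z (h + k) ≥ Z h + e`. Taking `h = N d`, the `(d+e)`-th zero therefore occurs by position
`h + k`; the forward and backward bounds on the ones give this with `k = 2e` and `k = 2e + 2`.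
-/

open Finset

def zeroCount (f : ℕ → ℕ) (n : ℕ) : ℕ :=
  ((Icc 1 n).filter (fun j => f j = 0)).card

theorem zeroCount_mono (f : ℕ → ℕ) : Monotone (zeroCount f) := fun _ _ hab =>
  card_le_card (filter_subset_filter _ (Icc_subset_Icc le_rfl hab))

theorem zeroCount_succ (f : ℕ → ℕ) (n : ℕ) :
    zeroCount f (n + 1) = zeroCount f n + if f (n + 1) = 0 then 1 else 0 := by
  have hnew : n + 1 ∉ Icc 1 n := by simp
  unfold zeroCount
  rw [← insert_Icc_right_eq_Icc_add_one (by omega), filter_insert]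
  split_ifs <;> simp [card_insert_of_notMem (fun h => hnew (mem_filter.1 h).1)]

theorem zeroCount_add_add_sum (f : ℕ → ℕ) (hf : ∀ j, f j ≤ 1) (h k : ℕ) :
    zeroCount f (h + k) + ∑ j ∈ Icc (h + 1) (h + k), f j = zeroCount f h + k := by
  induction k with
  | zero => simp
  | succ k ih =>
    rw [← add_assoc, sum_Icc_succ_top (by omega), zeroCount_succ]
    have := hf (h + k + 1)
    split_ifs <;> omega

theorem le_of_zeroCount_le {f : ℕ → ℕ} {m n : ℕ} (hm : 1 ≤ m) (hfm : f m = 0)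
    (hcount : zeroCount f m ≤ zeroCount f n) : m ≤ n := by
  obtain ⟨m, rfl⟩ := Nat.exists_eq_add_of_le' hm
  by_contra! hnm
  have hsucc := zeroCount_succ f m
  have hmono := zeroCount_mono f (Nat.le_of_lt_succ hnm)
  simp only [hfm, if_true] at hsucc
  omega

theorem sub_le_of_sum_add_le {f : ℕ → ℕ} (hf : ∀ j, f j ≤ 1) {m h k e : ℕ} (hm : 1 ≤ m)
    (hfm : f m = 0) (hcount : zeroCount f m = zeroCount f h + e)
    (hsum : ∑ j ∈ Icc (h + 1) (h + k), f j + e ≤ k) : m - h ≤ k := by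
  have hwindow := zeroCount_add_add_sum f hf h k
  have := le_of_zeroCount_le (n := h + k) hm hfm (by omega)
  omega

/-- For a {0,1} sequence in which any 2e consecutive entries following a forward position
contain at most e ones, and at most e+1 ones following a backward position, with N(d) the
position of the d-th zero: if N(d) is forward then N(d+e) - N(d) ≤ 2e, and if N(d) is
backward then N(d+e) - N(d) ≤ 2e + 2. -/
theorem stmt12 (f : ℕ → ℕ) (hf : ∀ j, f j ≤ 1)
    (forward : ℕ → Prop)
    (hfwd : ∀ h e : ℕ, 0 < e → forward h →
      ∑ j ∈ Finset.Icc (h + 1) (h + 2 * e), f j ≤ e)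
    (hbwd : ∀ h e : ℕ, 0 < e → ¬ forward h →
      ∑ j ∈ Finset.Icc (h + 1) (h + 2 * e), f j ≤ e + 1)
    (N : ℕ → ℕ)
    (hN : ∀ d, 1 ≤ d → 1 ≤ N d ∧ f (N d) = 0 ∧
      ((Finset.Icc 1 (N d)).filter (fun j => f j = 0)).card = d)
    (d e : ℕ) (hd : 1 ≤ d) (he : 0 < e) :
    (forward (N d) → N (d + e) - N d ≤ 2 * e) ∧
    (¬ forward (N d) → N (d + e) - N d ≤ 2 * e + 2) := by
  have hNd : zeroCount f (N d) = d := (hN d hd).2.2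
  obtain ⟨hpos, hzero, hNde⟩ := hN (d + e) (by omega)
  have hcount : zeroCount f (N (d + e)) = zeroCount f (N d) + e := by
    rw [hNd]; exact hNde
  constructor
  · intro hfw
    have hsum := hfwd (N d) e he hfw
    exact sub_le_of_sum_add_le hf hpos hzero hcount (by omega)
  · intro hbw
    have hsum := hbwd (N d) (e + 1) e.succ_pos hbw
    exact (sub_le_of_sum_add_le (k := 2 * (e + 1)) hf hpos hzero hcount (by omega)).trans_eq
      (by ring)
end

section
/- If the hypercube Q_t contains a spanning r-regular cyclic caterpillar Cat(e, r), then Q_{t+1} contains a spanning r-regular cyclic caterpillar Cat(2e, r). -/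
/-!
The map `(x, a) ↦ Fin.snoc x a` identifies `Q_t □ K_2` with `Q_{t+1}`, and a spanning
caterpillar of `Q_t` gives one of `Cat(e, r) □ K_2` inside `Q_t □ K_2`. So it suffices to find a
spanning `Cat(2e, r)` in `Cat(e, r) □ K_2`: the ladder `C_e □ K_2` has the Hamiltonian cycle that runs
along one rail `0, 1, …, e - 1` and back along the other, and each cycle vertex keeps the leaves of
the vertex of `Cat(e, r)` it lies over.
-/

/-- The n-dimensional hypercube: vertices are 0/1 strings of length n, adjacent when they
differ in exactly one coordinate. -/
def hypercube (n : ℕ) : SimpleGraph (Fin n → Bool) :=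
  SimpleGraph.fromRel (fun x y => (Finset.univ.filter fun i => x i ≠ y i).card = 1)

/-- The r-regular cyclic caterpillar Cat(e, r): a cycle on e vertices, each cycle vertex
having exactly r pendant leaves. -/
def cyclicCaterpillar (e r : ℕ) : SimpleGraph ((ZMod e) ⊕ (ZMod e × Fin r)) :=
  SimpleGraph.fromRel (fun u v =>
    match u, v with
    | Sum.inl i, Sum.inl j => j = i + 1
    | Sum.inl i, Sum.inr p => p.1 = i
    | _, _ => False)

/-- `H` is (isomorphic to) a spanning subgraph of `G`. -/
def containsSpanning {V W : Type*} (H : SimpleGraph V) (G : SimpleGraph W) : Prop :=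
  ∃ f : V → W, Function.Bijective f ∧ ∀ u v, H.Adj u v → G.Adj (f u) (f v)

open SimpleGraph

theorem containsSpanning.trans {U V W : Type*} {F : SimpleGraph U} {G : SimpleGraph V}
    {H : SimpleGraph W} (hFG : containsSpanning F G) (hGH : containsSpanning G H) :
    containsSpanning F H := by
  obtain ⟨f, hf, hfa⟩ := hFG
  obtain ⟨g, hg, hga⟩ := hGH
  exact ⟨g ∘ f, hg.comp hf, fun u v huv => hga _ _ (hfa u v huv)⟩

theorem containsSpanning.boxProd_right {U V X : Type*} {H : SimpleGraph U} {G : SimpleGraph V}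
    (h : containsSpanning H G) (K : SimpleGraph X) : containsSpanning (H □ K) (G □ K) := by
  obtain ⟨f, hf, hfa⟩ := h
  refine ⟨Prod.map f id, hf.prodMap Function.bijective_id, ?_⟩
  rintro ⟨u, a⟩ ⟨v, b⟩ (⟨huv, rfl⟩ | ⟨hab, rfl⟩)
  · exact Or.inl ⟨hfa u v huv, rfl⟩
  · exact Or.inr ⟨hab, rfl⟩

theorem hypercube_adj {n : ℕ} {x y : Fin n → Bool} :
    (hypercube n).Adj x y ↔ (Finset.univ.filter fun i => x i ≠ y i).card = 1 := by
  have hsymm : (Finset.univ.filter fun i => y i ≠ x i) = Finset.univ.filter fun i => x i ≠ y i :=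
    Finset.filter_congr fun _ _ => ne_comm
  refine ⟨fun ⟨_, h⟩ => h.elim id (hsymm ▸ ·), fun h => ⟨?_, Or.inl h⟩⟩
  rintro rfl
  simp at h

theorem card_filter_snoc_ne {n : ℕ} (x y : Fin n → Bool) (a b : Bool) :
    (Finset.univ.filter fun i : Fin (n + 1) =>
        (Fin.snoc x a : Fin (n + 1) → Bool) i ≠ (Fin.snoc y b : Fin (n + 1) → Bool) i).card
      = (Finset.univ.filter fun i => x i ≠ y i).card + if a ≠ b then 1 else 0 := by
  rw [Finset.card_filter, Finset.card_filter, Fin.sum_univ_castSucc]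
  simp [Fin.snoc_castSucc, Fin.snoc_last]

theorem containsSpanning_boxProd_hypercube (n : ℕ) :
    containsSpanning (hypercube n □ (⊤ : SimpleGraph Bool)) (hypercube (n + 1)) := by
  refine ⟨fun p => Fin.snoc p.1 p.2,
    (Fin.snocEquiv fun _ => Bool).bijective.comp (Equiv.prodComm _ _).bijective, ?_⟩
  rintro ⟨x, a⟩ ⟨y, b⟩ (⟨hxy, rfl⟩ | ⟨hab, rfl⟩)
  · rw [hypercube_adj] at hxy ⊢
    simp [card_filter_snoc_ne, hxy]
  · rw [hypercube_adj, card_filter_snoc_ne]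
    simpa using hab

/-- The Hamiltonian cycle of the ladder `C_e □ K_2` that runs through `0, 1, …, e - 1` on the rail
`false` and back through `e - 1, …, 1, 0` on the rail `true`. -/
def ladderCycle (e : ℕ) (i : ZMod (2 * e)) : ZMod e × Bool :=
  ((min i.val (2 * e - 1 - i.val) : ℕ), decide (e ≤ i.val))

section ladderCycle

variable {e : ℕ} [NeZero e]

theorem ladderCycle_injective : Function.Injective (ladderCycle e) := by
  intro i j hij
  simp only [ladderCycle, Prod.mk.injEq, decide_eq_decide] at hij
  obtain ⟨hfst, hsnd⟩ := hij
  have hi := ZMod.val_lt i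
  have hj := ZMod.val_lt j
  have := congrArg ZMod.val hfst
  rw [ZMod.val_cast_of_lt (by omega), ZMod.val_cast_of_lt (by omega)] at this
  exact ZMod.val_injective _ (by omega)

theorem ladderCycle_add_one (i : ZMod (2 * e)) :
    let p := ladderCycle e i; let q := ladderCycle e (i + 1)
    (p.2 = q.2 ∧ (q.1 = p.1 + 1 ∨ p.1 = q.1 + 1)) ∨ (p.1 = q.1 ∧ p.2 ≠ q.2) := by
  have hv := ZMod.val_lt i
  have hw : (i + 1).val = (i.val + 1) % (2 * e) := by
    rw [← ZMod.val_natCast, Nat.cast_add, ZMod.natCast_zmod_val, Nat.cast_one]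
  have hnat : ((min (i + 1).val (2 * e - 1 - (i + 1).val) = min i.val (2 * e - 1 - i.val) + 1 ∨
        min i.val (2 * e - 1 - i.val) = min (i + 1).val (2 * e - 1 - (i + 1).val) + 1) ∧
        (e ≤ i.val ↔ e ≤ (i + 1).val)) ∨
      (min i.val (2 * e - 1 - i.val) = min (i + 1).val (2 * e - 1 - (i + 1).val) ∧
        ¬(e ≤ i.val ↔ e ≤ (i + 1).val)) := by
    rcases Nat.lt_or_ge (i.val + 1) (2 * e) with h | h
    · rw [hw, Nat.mod_eq_of_lt h]; omega
    · rw [hw, show i.val + 1 = 2 * e by omega, Nat.mod_self]; omega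
  simp only [ladderCycle, ne_eq, decide_eq_decide]
  rcases hnat with ⟨hstep | hstep, hb⟩ | ⟨hstep, hb⟩
  · exact Or.inl ⟨hb, Or.inl (by rw [hstep, Nat.cast_succ])⟩
  · exact Or.inl ⟨hb, Or.inr (by rw [hstep, Nat.cast_succ])⟩
  · exact Or.inr ⟨congrArg _ hstep, hb⟩

end ladderCycle

theorem cyclicCaterpillar_adj_inl_inl {e r : ℕ} {i j : ZMod e} :
    (cyclicCaterpillar e r).Adj (.inl i) (.inl j) ↔ i ≠ j ∧ (j = i + 1 ∨ i = j + 1) := by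
  simp [cyclicCaterpillar]

theorem cyclicCaterpillar_adj_inl_inr {e r : ℕ} {i : ZMod e} {p : ZMod e × Fin r} :
    (cyclicCaterpillar e r).Adj (.inl i) (.inr p) ↔ p.1 = i := by
  simp [cyclicCaterpillar]

theorem cyclicCaterpillar_not_adj_inr_inr {e r : ℕ} {p q : ZMod e × Fin r} :
    ¬(cyclicCaterpillar e r).Adj (.inr p) (.inr q) := by
  simp [cyclicCaterpillar]

def caterpillarFold (e r : ℕ) :
    ZMod (2 * e) ⊕ ZMod (2 * e) × Fin r → (ZMod e ⊕ ZMod e × Fin r) × Bool :=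
  Sum.elim (fun i => (.inl (ladderCycle e i).1, (ladderCycle e i).2))
    (fun p => (.inr ((ladderCycle e p.1).1, p.2), (ladderCycle e p.1).2))

theorem caterpillarFold_injective (e r : ℕ) [NeZero e] :
    Function.Injective (caterpillarFold e r) := by
  rintro (i | ⟨i, k⟩) (j | ⟨j, l⟩) h <;>
    simp only [caterpillarFold, Sum.elim_inl, Sum.elim_inr, Prod.mk.injEq, Sum.inl.injEq,
      Sum.inr.injEq, reduceCtorEq, false_and] at h
  · rw [ladderCycle_injective (Prod.ext h.1 h.2)]
  · rw [ladderCycle_injective (Prod.ext h.1.1 h.2), h.1.2]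

theorem caterpillarFold_bijective (e r : ℕ) [NeZero e] :
    Function.Bijective (caterpillarFold e r) := by
  refine (Fintype.bijective_iff_injective_and_card _).2 ⟨caterpillarFold_injective e r, ?_⟩
  simp only [Fintype.card_sum, Fintype.card_prod, ZMod.card, Fintype.card_fin, Fintype.card_bool]
  ring

theorem containsSpanning_cyclicCaterpillar_two_mul {e : ℕ} (he : 2 ≤ e) (r : ℕ) :
    containsSpanning (cyclicCaterpillar (2 * e) r)
      (cyclicCaterpillar e r □ (⊤ : SimpleGraph Bool)) := by
  have : NeZero e := ⟨by omega⟩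
  have : Fact (1 < e) := ⟨he⟩
  have hstep : ∀ i : ZMod (2 * e), (cyclicCaterpillar e r □ ⊤).Adj
      (caterpillarFold e r (.inl i)) (caterpillarFold e r (.inl (i + 1))) := by
    intro i
    rcases ladderCycle_add_one i with ⟨hb, hi⟩ | ⟨hi, hb⟩
    · refine Or.inl ⟨cyclicCaterpillar_adj_inl_inl.2 ⟨?_, hi⟩, hb⟩
      rcases hi with hi | hi <;> rw [hi] <;> simp
    · exact Or.inr ⟨hb, congrArg Sum.inl hi⟩
  refine ⟨caterpillarFold e r, caterpillarFold_bijective e r, ?_⟩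
  rintro (i | ⟨i, k⟩) (j | ⟨j, l⟩) h
  · rcases (cyclicCaterpillar_adj_inl_inl.1 h).2 with rfl | rfl
    · exact hstep i
    · exact (hstep j).symm
  · obtain rfl : j = i := cyclicCaterpillar_adj_inl_inr.1 h
    exact Or.inl ⟨cyclicCaterpillar_adj_inl_inr.2 rfl, rfl⟩
  · obtain rfl : i = j := cyclicCaterpillar_adj_inl_inr.1 h.symm
    exact Or.inl ⟨(cyclicCaterpillar_adj_inl_inr.2 rfl).symm, rfl⟩
  · exact (cyclicCaterpillar_not_adj_inr_inr h).elim

/-- If Q_t contains a spanning r-regular cyclic caterpillar Cat(e, r), then Q_{t+1}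
contains a spanning r-regular cyclic caterpillar Cat(2e, r). -/
theorem stmt13 (t e r : ℕ) (he : 3 ≤ e)
    (h : containsSpanning (cyclicCaterpillar e r) (hypercube t)) :
    containsSpanning (cyclicCaterpillar (2 * e) r) (hypercube (t + 1)) :=
  (containsSpanning_cyclicCaterpillar_two_mul (by omega) r).trans
    ((h.boxProd_right ⊤).trans (containsSpanning_boxProd_hypercube t))
end

section
/- Suppose Q_t contains a spanning (2r+1)-regular cyclic caterpillar Cat(e, 2r+1). Then there is a bijection L : V(Q_t) → {1, 2, …, 2^t} such that for all vertices x, y, if |L(x) - L(y)| ≤ 2r + 3 (difference taken modulo 2^t) then the Hamming distance between x and y in Q_t is at most 3. -/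
/-!
Cut the spanning caterpillar into its `e` blocks, each consisting of the `n` leaves of a spine
vertex followed by that spine vertex, and number the vertices block by block. Every vertex is
at distance at most one from the spine vertex of its block, consecutive spine vertices are
adjacent, and a window of `n + 3` consecutive numbers meets at most two consecutive blocks,
unless it starts at a spine vertex and ends at the first leaf of the block after next. In each
case the two ends are joined by a path of length at most three, and a map that sends edges to
hypercube edges is `1`-Lipschitz for the Hamming distance.
-/

open Function

lemma hypercube_adj_iff {t : ℕ} {x y : Fin t → Bool} :
    (hypercube t).Adj x y ↔ hammingDist x y = 1 := by
  rw [hypercube, SimpleGraph.fromRel_adj]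
  change x ≠ y ∧ (hammingDist x y = 1 ∨ hammingDist y x = 1) ↔ _
  rw [hammingDist_comm y x, or_self, and_iff_right_iff_imp]
  intro h
  exact hammingDist_pos.mp (by omega)

lemma SimpleGraph.Hom.hammingDist_le_one {V : Type*} {G : SimpleGraph V} {t : ℕ}
    (f : G →g hypercube t) {u v : V} (h : G.Adj u v) : hammingDist (f u) (f v) ≤ 1 :=
  (hypercube_adj_iff.mp (f.map_adj h)).le

lemma Nat.add_div_succ_cases (k d n : ℕ) (hd : d ≤ n + 2) :
    (k + d) / (n + 1) = k / (n + 1) ∨ (k + d) / (n + 1) = k / (n + 1) + 1 ∨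
      ((k + d) / (n + 1) = k / (n + 1) + 2 ∧ k % (n + 1) = n) := by
  have hk := Nat.div_add_mod k (n + 1)
  have hkd := Nat.div_add_mod (k + d) (n + 1)
  have hk_lt : k % (n + 1) < n + 1 := Nat.mod_lt k (by omega)
  obtain ⟨j, hj⟩ : ∃ j, (k + d) / (n + 1) = k / (n + 1) + j :=
    Nat.exists_eq_add_of_le (Nat.div_le_div_right (by omega))
  rw [hj, mul_add] at hkd
  have hj3 : j < 3 := by
    by_contra! h
    have := Nat.mul_le_mul_left (n + 1) h
    omega
  rw [hj]
  interval_cases j <;> omega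

namespace cyclicCaterpillar

variable {e n : ℕ}

/-- The `k`-th vertex in the block-by-block numbering: block `k / (n + 1)`, in which positions
`0, …, n - 1` are the leaves and position `n` is the spine vertex. -/
def vertexAt (e n k : ℕ) : ZMod e ⊕ ZMod e × Fin n :=
  if h : k % (n + 1) < n then Sum.inr (((k / (n + 1) : ℕ) : ZMod e), ⟨k % (n + 1), h⟩)
  else Sum.inl ((k / (n + 1) : ℕ) : ZMod e)

def spineAt (e n k : ℕ) : ZMod e ⊕ ZMod e × Fin n :=
  Sum.inl ((k / (n + 1) : ℕ) : ZMod e)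

lemma vertexAt_of_mod_eq {k : ℕ} (h : k % (n + 1) = n) : vertexAt e n k = spineAt e n k := by
  simp [vertexAt, spineAt, h]

lemma vertexAt_mod (k : ℕ) : vertexAt e n (k % (e * (n + 1))) = vertexAt e n k := by
  have hmod : k % (e * (n + 1)) % (n + 1) = k % (n + 1) :=
    Nat.mod_mod_of_dvd k (dvd_mul_left _ _)
  have hdiv : ((k % (e * (n + 1)) / (n + 1) : ℕ) : ZMod e) = ((k / (n + 1) : ℕ) : ZMod e) := by
    rw [Nat.mod_mul_left_div_self, ZMod.natCast_mod]
  simp only [vertexAt, hmod, hdiv]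

lemma vertexAt_surjective [NeZero e] : Surjective (vertexAt e n) := by
  have hpos : 0 < n + 1 := n.succ_pos
  rintro (i | ⟨i, j⟩)
  · refine ⟨(n + 1) * i.val + n, ?_⟩
    have hmod : ((n + 1) * i.val + n) % (n + 1) = n := by simp
    rw [vertexAt_of_mod_eq hmod, spineAt, Nat.mul_add_div hpos, Nat.div_eq_of_lt n.lt_succ_self]
    simp
  · have hj : (j : ℕ) < n + 1 := j.is_lt.trans n.lt_succ_self
    refine ⟨(n + 1) * i.val + j, ?_⟩
    have hmod : ((n + 1) * i.val + j) % (n + 1) = j := by simp [hj]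
    have hdiv : ((n + 1) * i.val + j) / (n + 1) = i.val := by
      rw [Nat.mul_add_div hpos, Nat.div_eq_of_lt hj, add_zero]
    simp [vertexAt, hmod, hdiv]

lemma bijective_vertexAt_val {N : ℕ} [NeZero N] (hN : e * (n + 1) = N) :
    Bijective fun a : ZMod N => vertexAt e n a.val := by
  subst hN
  have : NeZero e := ⟨left_ne_zero_of_mul (NeZero.ne (e * (n + 1)))⟩
  refine (Fintype.bijective_iff_surjective_and_card _).mpr ⟨fun w => ?_, ?_⟩
  · obtain ⟨k, rfl⟩ := vertexAt_surjective w
    exact ⟨k, by simp only [ZMod.val_natCast, vertexAt_mod]⟩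
  · simp only [ZMod.card, Fintype.card_sum, Fintype.card_prod, Fintype.card_fin]
    ring

lemma adj_leaf (i : ZMod e) (j : Fin n) :
    (cyclicCaterpillar e n).Adj (Sum.inl i) (Sum.inr (i, j)) := by
  simp [cyclicCaterpillar]

lemma adj_succ {i : ZMod e} (h : i + 1 ≠ i) :
    (cyclicCaterpillar e n).Adj (Sum.inl i) (Sum.inl (i + 1)) := by
  simp [cyclicCaterpillar, Ne.symm h]

variable {t : ℕ} (f : cyclicCaterpillar e n →g hypercube t)

lemma hammingDist_spineAt_vertexAt_le (k : ℕ) :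
    hammingDist (f (spineAt e n k)) (f (vertexAt e n k)) ≤ 1 := by
  unfold vertexAt spineAt
  split
  · exact f.hammingDist_le_one (adj_leaf _ _)
  · simp

lemma hammingDist_inl_succ_le (i : ZMod e) :
    hammingDist (f (Sum.inl i)) (f (Sum.inl (i + 1))) ≤ 1 := by
  by_cases h : i + 1 = i
  · simp [h]
  · exact f.hammingDist_le_one (adj_succ h)

lemma hammingDist_vertexAt_add_le (k d : ℕ) (hd : d ≤ n + 2) :
    hammingDist (f (vertexAt e n k)) (f (vertexAt e n (k + d))) ≤ 3 := by
  have hu := hammingDist_spineAt_vertexAt_le f k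
  have hv := hammingDist_spineAt_vertexAt_le f (k + d)
  rw [hammingDist_comm] at hu
  rcases Nat.add_div_succ_cases k d n hd with hq | hq | ⟨hq, hk⟩
  · rw [spineAt, hq, ← spineAt] at hv
    have := hammingDist_triangle (f (vertexAt e n k)) (f (spineAt e n k)) (f (vertexAt e n (k + d)))
    omega
  · rw [spineAt, hq, Nat.cast_succ] at hv
    rw [spineAt] at hu
    generalize ((k / (n + 1) : ℕ) : ZMod e) = i at hu hv
    have := hammingDist_inl_succ_le f i
    have := hammingDist_triangle (f (vertexAt e n k)) (f (Sum.inl i)) (f (vertexAt e n (k + d)))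
    have := hammingDist_triangle (f (Sum.inl i)) (f (Sum.inl (i + 1))) (f (vertexAt e n (k + d)))
    omega
  · rw [spineAt, hq, Nat.cast_add, Nat.cast_two, ← one_add_one_eq_two, ← add_assoc] at hv
    rw [vertexAt_of_mod_eq hk, spineAt]
    generalize ((k / (n + 1) : ℕ) : ZMod e) = i at hv ⊢
    have := hammingDist_inl_succ_le f i
    have := hammingDist_inl_succ_le f (i + 1)
    have := hammingDist_triangle (f (Sum.inl i)) (f (Sum.inl (i + 1))) (f (vertexAt e n (k + d)))
    have := hammingDist_triangle (f (Sum.inl (i + 1))) (f (Sum.inl (i + 1 + 1)))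
      (f (vertexAt e n (k + d)))
    omega

lemma hammingDist_vertexAt_val_le {N : ℕ} [NeZero N] (hN : e * (n + 1) = N) {a b : ZMod N}
    (hab : (b - a).val ≤ n + 2) :
    hammingDist (f (vertexAt e n a.val)) (f (vertexAt e n b.val)) ≤ 3 := by
  subst hN
  have hb : b.val = (a.val + (b - a).val) % (e * (n + 1)) := by
    rw [← ZMod.val_add, add_sub_cancel]
  rw [hb, vertexAt_mod]
  exact hammingDist_vertexAt_add_le f _ _ hab

end cyclicCaterpillar

theorem stmt15_general (t e r : ℕ)
    (h : containsSpanning (cyclicCaterpillar e (2 * r + 1)) (hypercube t)) :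
    ∃ L : (Fin t → Bool) → ZMod (2 ^ t), Function.Bijective L ∧
      ∀ x y : Fin t → Bool,
        min (L x - L y).val (L y - L x).val ≤ 2 * r + 3 →
        (Finset.univ.filter fun i => x i ≠ y i).card ≤ 3 := by
  obtain ⟨f, hf_bij, hf_adj⟩ := h
  let φ : cyclicCaterpillar e (2 * r + 1) →g hypercube t := ⟨f, hf_adj _ _⟩
  have : NeZero e := ⟨by
    rintro rfl
    have := Finite.of_injective f hf_bij.1
    exact not_finite (ZMod 0 ⊕ ZMod 0 × Fin (2 * r + 1))⟩
  have hcard : e * (2 * r + 1 + 1) = 2 ^ t := by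
    have := Fintype.card_of_bijective hf_bij
    simp only [Fintype.card_sum, Fintype.card_prod, ZMod.card, Fintype.card_fin,
      Fintype.card_pi, Fintype.card_bool, Finset.prod_const, Finset.card_univ] at this
    linarith
  let E := Equiv.ofBijective _ (hf_bij.comp (cyclicCaterpillar.bijective_vertexAt_val hcard))
  refine ⟨E.symm, E.symm.bijective, fun x y hxy => ?_⟩
  change hammingDist x y ≤ 3
  rw [← E.apply_symm_apply x, ← E.apply_symm_apply y]
  rcases min_le_iff.mp hxy with h | h
  · rw [hammingDist_comm]
    exact cyclicCaterpillar.hammingDist_vertexAt_val_le φ hcard h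
  · exact cyclicCaterpillar.hammingDist_vertexAt_val_le φ hcard h

/-- If Q_t contains a spanning (2r+1)-regular cyclic caterpillar Cat(e, 2r+1), then there
is a bijective labeling L of the vertices of Q_t by Z/2^t such that any two vertices whose
labels differ (cyclically) by at most 2r+3 are at Hamming distance at most 3. -/
theorem stmt15 (t e r : ℕ) (he : 3 ≤ e)
    (h : containsSpanning (cyclicCaterpillar e (2 * r + 1)) (hypercube t)) :
    ∃ L : (Fin t → Bool) → ZMod (2 ^ t), Function.Bijective L ∧
      ∀ x y : Fin t → Bool,
        min (L x - L y).val (L y - L x).val ≤ 2 * r + 3 →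
        (Finset.univ.filter fun i => x i ≠ y i).card ≤ 3 :=
  stmt15_general t e r h
end
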